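/- arXiv:0912.0082 — 3 statements merged into one kernel-verified Lean document; each statement's English description precedes it below -/
import Mathlib

section
/- Let K be an algebraically closed field equipped with a real-valued valuation v, with valuation ring O_v, maximal ideal 𝔪_v and residue field Δ = O_v/𝔪_v, and let π : O_v^n → Δ^n be the coordinatewise reduction map. For any K-vector subspace L ⊆ K^n, the image L' = π(L ∩ O_v^n) is a Δ-vector subspace of Δ^n with dim_Δ(L') = dim_K(L). -/
open MvPolynomial

/-- `v : K → ℝ` is a real-valued valuation on the field `K`.  This encodes the usual
notion of a map `v : K → ℝ ∪ {∞}` with `v x = ∞ ↔ x = 0`, `v (x*y) = v x + v y` and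
`v (x+y) ≥ min (v x) (v y)`: the value of `v` at `0` is irrelevant (it "is" `∞`), and
all the axioms involving `0` are automatic. -/
def IsRealValuation {K : Type*} [Field K] (v : K → ℝ) : Prop :=
  (∀ x y : K, x ≠ 0 → y ≠ 0 → v (x * y) = v x + v y) ∧
  (∀ x y : K, x ≠ 0 → y ≠ 0 → x + y ≠ 0 → min (v x) (v y) ≤ v (x + y))

theorem IsRealValuation.v_one {K : Type*} [Field K] {v : K → ℝ}
    (hv : IsRealValuation v) : v 1 = 0 := by
  have h := hv.1 1 1 one_ne_zero one_ne_zero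
  simp only [one_mul] at h
  linarith

theorem IsRealValuation.v_neg {K : Type*} [Field K] {v : K → ℝ}
    (hv : IsRealValuation v) (x : K) (hx : x ≠ 0) : v (-x) = v x := by
  have h1 : v ((-1 : K) * (-1 : K)) = v (-1 : K) + v (-1 : K) :=
    hv.1 (-1) (-1) (by norm_num) (by norm_num)
  have h2 : v (-1 : K) = 0 := by
    rw [neg_one_mul, neg_neg, hv.v_one] at h1; linarith
  have h3 : v ((-1 : K) * x) = v (-1 : K) + v x := hv.1 (-1) x (by norm_num) hx
  rw [neg_one_mul] at h3
  rw [h3, h2, zero_add]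

/-- The valuation ring `O_v = { x | v x ≥ 0 }` (together with `0`). -/
def valuationSubring {K : Type*} [Field K] (v : K → ℝ) (hv : IsRealValuation v) :
    Subring K where
  carrier := { x : K | x = 0 ∨ 0 ≤ v x }
  zero_mem' := Or.inl rfl
  one_mem' := Or.inr (le_of_eq hv.v_one.symm)
  mul_mem' := by
    rintro x y (rfl | hx) hy
    · exact Or.inl (zero_mul _)
    rcases hy with rfl | hy
    · exact Or.inl (mul_zero _)
    by_cases hx0 : x = 0
    · exact Or.inl (by rw [hx0, zero_mul])
    by_cases hy0 : y = 0
    · exact Or.inl (by rw [hy0, mul_zero])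
    · exact Or.inr (by rw [hv.1 x y hx0 hy0]; positivity)
  add_mem' := by
    rintro x y hx hy
    by_cases hxy : x + y = 0
    · exact Or.inl hxy
    rcases hx with rfl | hx
    · rw [zero_add] at hxy ⊢; exact hy
    rcases hy with rfl | hy
    · rw [add_zero] at hxy ⊢; exact Or.inr hx
    by_cases hx0 : x = 0
    · subst hx0; rw [zero_add] at hxy ⊢; exact Or.inr hy
    by_cases hy0 : y = 0
    · subst hy0; rw [add_zero] at hxy ⊢; exact Or.inr hx
    · exact Or.inr (le_trans (le_min hx hy) (hv.2 x y hx0 hy0 hxy))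
  neg_mem' := by
    rintro x (rfl | hx)
    · exact Or.inl neg_zero
    by_cases hx0 : x = 0
    · exact Or.inl (by rw [hx0, neg_zero])
    · exact Or.inr (by rw [hv.v_neg x hx0]; exact hx)

/-- The maximal ideal `𝔪_v = { x | v x > 0 }` (together with `0`) of the valuation
ring. -/
def valuationMaxIdeal {K : Type*} [Field K] (v : K → ℝ) (hv : IsRealValuation v) :
    Ideal (valuationSubring v hv) where
  carrier := { x : valuationSubring v hv | (x : K) = 0 ∨ 0 < v (x : K) }
  zero_mem' := Or.inl rfl
  add_mem' := by
    rintro a b ha hb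
    have ha' : (a : K) = 0 ∨ 0 < v (a : K) := ha
    have hb' : (b : K) = 0 ∨ 0 < v (b : K) := hb
    have hcoe : ((a + b : valuationSubring v hv) : K) = (a : K) + (b : K) := by
      push_cast; ring
    show ((a + b : valuationSubring v hv) : K) = 0 ∨ 0 < v ((a + b : valuationSubring v hv) : K)
    by_cases ha0 : (a : K) = 0
    · rw [hcoe, ha0, zero_add]; exact hb'
    by_cases hb0 : (b : K) = 0
    · rw [hcoe, hb0, add_zero]; exact ha'
    by_cases hab : (a : K) + (b : K) = 0
    · exact Or.inl (by rw [hcoe]; exact hab)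
    refine Or.inr ?_
    rw [hcoe]
    exact lt_of_lt_of_le (lt_min (ha'.resolve_left ha0) (hb'.resolve_left hb0))
      (hv.2 _ _ ha0 hb0 hab)
  smul_mem' := by
    rintro c x hx
    have hx' : (x : K) = 0 ∨ 0 < v (x : K) := hx
    have hcoe : ((c • x : valuationSubring v hv) : K) = (c : K) * (x : K) := rfl
    show ((c • x : valuationSubring v hv) : K) = 0 ∨ 0 < v ((c • x : valuationSubring v hv) : K)
    by_cases hx0 : (x : K) = 0
    · exact Or.inl (by rw [hcoe, hx0, mul_zero])
    by_cases hc0 : (c : K) = 0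
    · exact Or.inl (by rw [hcoe, hc0, zero_mul])
    refine Or.inr ?_
    rw [hcoe, hv.1 _ _ hc0 hx0]
    have hc : (c : K) = 0 ∨ 0 ≤ v (c : K) := c.2
    have := hc.resolve_left hc0
    have := hx'.resolve_left hx0
    linarith

/-- The residue field `Δ = O_v / 𝔪_v`. -/
abbrev residueField {K : Type*} [Field K] (v : K → ℝ) (hv : IsRealValuation v) :=
  valuationSubring v hv ⧸ valuationMaxIdeal v hv

theorem IsRealValuation.v_inv {K : Type*} [Field K] {v : K → ℝ}
    (hv : IsRealValuation v) (x : K) (hx : x ≠ 0) : v x⁻¹ = - v x := by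
  have h := hv.1 x x⁻¹ hx (inv_ne_zero hx)
  rw [mul_inv_cancel₀ hx, hv.v_one] at h
  linarith

theorem valuationMaxIdeal_isMaximal {K : Type*} [Field K] (v : K → ℝ)
    (hv : IsRealValuation v) : (valuationMaxIdeal v hv).IsMaximal := by
  rw [Ideal.isMaximal_iff]
  constructor
  · rintro (h | h)
    · exact one_ne_zero (h : (1 : K) = 0)
    · rw [show ((1 : valuationSubring v hv) : K) = 1 from rfl, hv.v_one] at h
      linarith
  · rintro J x _ hx hxJ
    have hx' : ¬ ((x : K) = 0 ∨ 0 < v (x : K)) := hx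
    push_neg at hx'
    have hx0 : (x : K) ≠ 0 := hx'.1
    have hvx : v (x : K) = 0 := le_antisymm hx'.2 (x.2.resolve_left hx0)
    have hvinv : v ((x : K)⁻¹) = 0 := by rw [hv.v_inv _ hx0, hvx, neg_zero]
    set y : valuationSubring v hv := ⟨(x : K)⁻¹, Or.inr (le_of_eq hvinv.symm)⟩
    have : y * x = 1 := Subtype.ext (by simp [y, inv_mul_cancel₀ hx0])
    rw [← this]
    exact J.mul_mem_left y hxJ

section Red
set_option synthInstance.maxHeartbeats 1000000
set_option maxHeartbeats 4000000

variable {K : Type*} [Field K] (v : K → ℝ) (hv : IsRealValuation v) {n : ℕ}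

/-- The reduction of `L ∩ O_v^n` as a submodule of `Δ^n`. -/
def redSub (L : Submodule K (Fin n → K)) :
    Submodule (residueField v hv) (Fin n → residueField v hv) where
  carrier := { y : Fin n → residueField v hv |
          ∃ x : Fin n → K, x ∈ L ∧ ∃ hx : ∀ i, x i ∈ valuationSubring v hv,
            ∀ i, y i = Ideal.Quotient.mk (valuationMaxIdeal v hv) ⟨x i, hx i⟩ }
  zero_mem' := by
    refine ⟨0, L.zero_mem, fun i => (valuationSubring v hv).zero_mem, fun i => ?_⟩
    have : (⟨(0 : Fin n → K) i, (valuationSubring v hv).zero_mem⟩ :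
        valuationSubring v hv) = 0 := rfl
    rw [this, map_zero]
    rfl
  add_mem' := by
    rintro a b ⟨x, hxL, hx, hy⟩ ⟨x', hxL', hx', hy'⟩
    refine ⟨x + x', L.add_mem hxL hxL',
      fun i => (valuationSubring v hv).add_mem (hx i) (hx' i), fun i => ?_⟩
    have : (⟨(x + x') i, _⟩ : valuationSubring v hv)
        = ⟨x i, hx i⟩ + ⟨x' i, hx' i⟩ := rfl
    rw [this, map_add]
    show a i + b i = _
    rw [hy i, hy' i]
  smul_mem' := by
    rintro c y ⟨x, hxL, hx, hy⟩
    obtain ⟨c₀, rfl⟩ := Ideal.Quotient.mk_surjective c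
    refine ⟨(c₀ : K) • x, L.smul_mem _ hxL,
      fun i => (valuationSubring v hv).mul_mem c₀.2 (hx i), fun i => ?_⟩
    have : (⟨((c₀ : K) • x) i, _⟩ : valuationSubring v hv)
        = c₀ * ⟨x i, hx i⟩ := rfl
    rw [this, map_mul]
    show _ * y i = _
    rw [hy i]

theorem redSub_mono {L₁ L₂ : Submodule K (Fin n → K)} (h : L₁ ≤ L₂) :
    redSub v hv L₁ ≤ redSub v hv L₂ := by
  rintro y ⟨x, hxL, hx, hy⟩
  exact ⟨x, h hxL, hx, hy⟩

theorem redSub_finrank (d : ℕ) : ∀ L : Submodule K (Fin n → K),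
    Module.finrank K L = d →
    Module.finrank (residueField v hv) (redSub v hv L) = d := by
  haveI : (valuationMaxIdeal v hv).IsMaximal := valuationMaxIdeal_isMaximal v hv
  letI : Field (residueField v hv) := Ideal.Quotient.field _
  induction d with
  | zero =>
    intro L hL
    have hLbot : L = ⊥ := Submodule.finrank_eq_zero.mp hL
    subst hLbot
    have : redSub v hv (⊥ : Submodule K (Fin n → K)) = ⊥ := by
      rw [eq_bot_iff]
      rintro y ⟨x, hxL, hx, hy⟩
      have hx0 : x = 0 := hxL
      subst hx0
      have : y = 0 := by
        funext i
        rw [hy i]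
        have : (⟨(0 : Fin n → K) i, hx i⟩ : valuationSubring v hv) = 0 := rfl
        rw [this, map_zero]; rfl
      simp [this]
    rw [this, finrank_bot]
  | succ d ih =>
    intro L hL
    classical
    -- L is nonzero, pick a nonzero vector
    have hLne : L ≠ ⊥ := by
      intro h; rw [h, finrank_bot] at hL; omega
    obtain ⟨x, hxL, hx0⟩ := Submodule.exists_mem_ne_zero_of_ne_bot hLne
    -- pick coordinate of minimal valuation
    have hFne : (Finset.univ.filter fun i => x i ≠ 0).Nonempty := by
      by_contra h
      rw [Finset.not_nonempty_iff_eq_empty, Finset.filter_eq_empty_iff] at h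
      exact hx0 (funext fun i => not_not.mp (h (Finset.mem_univ i)))
    obtain ⟨i₀, hi₀mem, hi₀min⟩ := Finset.exists_min_image _ (fun i => v (x i)) hFne
    have hxi₀ : x i₀ ≠ 0 := (Finset.mem_filter.mp hi₀mem).2
    set z : Fin n → K := (x i₀)⁻¹ • x with hzdef
    have hzL : z ∈ L := L.smul_mem _ hxL
    have hzi₀ : z i₀ = 1 := by simp [hzdef, inv_mul_cancel₀ hxi₀]
    have hzO : ∀ i, z i ∈ valuationSubring v hv := by
      intro i
      by_cases hxi : x i = 0
      · exact Or.inl (by simp [hzdef, hxi])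
      · refine Or.inr ?_
        have : z i = (x i₀)⁻¹ * x i := rfl
        rw [this, hv.1 _ _ (inv_ne_zero hxi₀) hxi, hv.v_inv _ hxi₀]
        have := hi₀min i (Finset.mem_filter.mpr ⟨Finset.mem_univ i, hxi⟩)
        linarith
    -- decompose L
    set L₀ : Submodule K (Fin n → K) := L ⊓ LinearMap.ker (LinearMap.proj i₀)
      with hL₀def
    have hsupL : Submodule.span K {z} ⊔ L₀ = L := by
      apply le_antisymm
      · exact sup_le ((Submodule.span_singleton_le_iff_mem _ _).mpr hzL) inf_le_left
      · intro y hyL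
        have h1 : y i₀ • z ∈ Submodule.span K {z} :=
          Submodule.smul_mem _ _ (Submodule.mem_span_singleton_self z)
        have h2 : y - y i₀ • z ∈ L₀ := by
          refine ⟨L.sub_mem hyL (L.smul_mem _ hzL), ?_⟩
          show (y - y i₀ • z) i₀ = 0
          simp [hzi₀]
        exact Submodule.mem_sup.mpr ⟨_, h1, _, h2, by ring⟩
    have hinfL : Submodule.span K {z} ⊓ L₀ = ⊥ := by
      rw [eq_bot_iff]
      rintro w ⟨hw1, _, hw2⟩
      obtain ⟨c, rfl⟩ := Submodule.mem_span_singleton.mp hw1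
      have : (c • z) i₀ = 0 := hw2
      rw [show (c • z) i₀ = c * z i₀ from rfl, hzi₀, mul_one] at this
      simp [this]
    have hzne : z ≠ 0 := fun h => one_ne_zero (hzi₀ ▸ congrFun h i₀)
    have hL₀rank : Module.finrank K L₀ = d := by
      have := Submodule.finrank_sup_add_finrank_inf_eq (Submodule.span K {z}) L₀
      rw [hsupL, hinfL, hL, finrank_bot, finrank_span_singleton hzne] at this
      omega
    have hIH := ih L₀ hL₀rank
    -- the reduction of z
    set zb : Fin n → residueField v hv :=
      fun i => Ideal.Quotient.mk (valuationMaxIdeal v hv) ⟨z i, hzO i⟩ with hzbdef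
    have hzbL : zb ∈ redSub v hv L := ⟨z, hzL, hzO, fun i => rfl⟩
    have hzbi₀ : zb i₀ = 1 := by
      have : (⟨z i₀, hzO i₀⟩ : valuationSubring v hv) = 1 := Subtype.ext hzi₀
      rw [hzbdef]; dsimp only; rw [this, map_one]
    have hzbne : zb ≠ 0 := fun h => one_ne_zero (hzbi₀ ▸ congrFun h i₀)
    -- coordinate i₀ of anything in redSub L₀ vanishes
    have hcoord : ∀ y ∈ redSub v hv L₀, y i₀ = 0 := by
      rintro y ⟨x', ⟨_, hx'0⟩, hx', hy⟩
      have hx'i₀ : x' i₀ = 0 := hx'0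
      rw [hy i₀]
      have : (⟨x' i₀, hx' i₀⟩ : valuationSubring v hv) = 0 := Subtype.ext hx'i₀
      rw [this, map_zero]
    have hsup : Submodule.span (residueField v hv) {zb} ⊔ redSub v hv L₀
        = redSub v hv L := by
      apply le_antisymm
      · exact sup_le ((Submodule.span_singleton_le_iff_mem _ _).mpr hzbL)
          (redSub_mono v hv inf_le_left)
      · rintro y ⟨x', hx'L, hx', hy⟩
        set c : valuationSubring v hv := ⟨x' i₀, hx' i₀⟩ with hcdef
        have h1 : (Ideal.Quotient.mk (valuationMaxIdeal v hv) c) • zb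
            ∈ Submodule.span (residueField v hv) {zb} :=
          Submodule.smul_mem _ _ (Submodule.mem_span_singleton_self zb)
        have hx₀O : ∀ i, (x' - x' i₀ • z) i ∈ valuationSubring v hv := fun i =>
          (valuationSubring v hv).sub_mem (hx' i)
            ((valuationSubring v hv).mul_mem (hx' i₀) (hzO i))
        have h2 : (fun i => Ideal.Quotient.mk (valuationMaxIdeal v hv)
            ⟨(x' - x' i₀ • z) i, hx₀O i⟩) ∈ redSub v hv L₀ := by
          refine ⟨x' - x' i₀ • z,
            ⟨L.sub_mem hx'L (L.smul_mem _ hzL), ?_⟩, hx₀O, fun i => rfl⟩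
          show (x' - x' i₀ • z) i₀ = 0
          simp [hzi₀]
        refine Submodule.mem_sup.mpr ⟨_, h1, _, h2, ?_⟩
        symm
        funext i
        show y i = _ * zb i + Ideal.Quotient.mk _ _
        rw [hy i, hzbdef]
        dsimp only
        rw [← map_mul]
        rw [← map_add]
        congr 1
        refine Subtype.ext ?_
        show x' i = x' i₀ * z i + (x' i - x' i₀ * z i)
        ring
    have hinf : Submodule.span (residueField v hv) {zb} ⊓ redSub v hv L₀ = ⊥ := by
      rw [eq_bot_iff]
      rintro w ⟨hw1, hw2⟩
      obtain ⟨c, rfl⟩ := Submodule.mem_span_singleton.mp hw1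
      have h0 : (c • zb) i₀ = 0 := hcoord _ hw2
      rw [show (c • zb) i₀ = c * zb i₀ from rfl, hzbi₀, mul_one] at h0
      simp [h0]
    have := Submodule.finrank_sup_add_finrank_inf_eq
      (Submodule.span (residueField v hv) {zb}) (redSub v hv L₀)
    rw [hsup, hinf, hIH, finrank_bot, finrank_span_singleton hzbne] at this
    omega

end Red
set_option synthInstance.maxHeartbeats 1000000 in
set_option maxHeartbeats 1000000 in
/-- For a `K`-vector subspace `L ⊆ K^n`, the image of `L ∩ O_v^n` under
coordinatewise reduction modulo `𝔪_v` is a vector subspace of `Δ^n` (where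
`Δ = O_v/𝔪_v` is the residue field) of the same dimension as `L`. -/
theorem reduction_of_subspace_is_subspace_of_same_dim
    {K : Type*} [Field K] [IsAlgClosed K] (v : K → ℝ) (hv : IsRealValuation v)
    {n : ℕ} (L : Submodule K (Fin n → K)) :
    ∃ L' : Submodule (residueField v hv) (Fin n → residueField v hv),
      (L' : Set (Fin n → residueField v hv)) =
        { y : Fin n → residueField v hv |
          ∃ x : Fin n → K, x ∈ L ∧ ∃ hx : ∀ i, x i ∈ valuationSubring v hv,
            ∀ i, y i = Ideal.Quotient.mk (valuationMaxIdeal v hv) ⟨x i, hx i⟩ } ∧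
      Module.finrank (residueField v hv) L' = Module.finrank K L :=
  ⟨redSub v hv L, rfl, redSub_finrank v hv _ L rfl⟩
end

section
/- Let R be a commutative Noetherian ring and let I = Q_1 ∩ … ∩ Q_k be a minimal primary decomposition, with Q_i P_i-primary. Let f ∈ R. Then for every integer l ≥ 1 such that (I : f^{l−1}) ≠ (I : f^l), one has l ≤ Σ_{i : f ∈ P_i} mult_I(P_i); equivalently, ℓ_f(I) ≤ Σ_{i : f ∈ P_i} mult_I(P_i). -/
/-!
Choose `t` with `g f^l ∈ I` but `g f^(l-1) ∉ Q_t`. More generally, if `x f^(n+1) ∈ Q_σ` whenever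
`P_σ ⊆ P_t` while `x f^n ∉ Q_t`, then `n + 1` is at most the sum of `mult(P_σ)` over the
`P_σ ⊆ P_t` containing `f`, by induction along strict inclusion of the primes. Let `m` be the
least exponent with `x f^m ∈ I_t`. If `m > 0`, some `Q_s` with `P_s ⊊ P_t` has
`x f^(m-1) ∉ Q_s`, so induction bounds `m` by the part of the sum strictly below `P_t`. The
`P_t`-primary ideals `(Q_t : f^j)`, `j ≤ n - m`, intersected with `I_t` form a chain starting at
`Q_t ∩ I_t`, strictly increasing since `x f^(n+1-j) ∈ I_t` lies in the `j`-th term but not in the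
previous one; hence `n + 1 - m ≤ mult(P_t)`.
-/

/-- There is a chain of ideals `Q_i ∩ I_i = J_ℓ ⊊ J_{ℓ-1} ⊊ … ⊊ J_1 = P ∩ I_i` of length
`ℓ` in which every `J_j` is of the form `R_j ∩ I_i` for some `P`-primary ideal `R_j`.
Here `J k` denotes `J_{k+1}`. -/
def IsMultChain {R : Type*} [CommRing R] (Qi Ii P : Ideal R) (ℓ : ℕ) : Prop :=
  ∃ J : Fin ℓ → Ideal R,
    (∀ a b : Fin ℓ, a < b → J b < J a) ∧
    (∀ k : Fin ℓ, ∃ Rk : Ideal R, Rk.IsPrimary ∧ Rk.radical = P ∧ J k = Rk ⊓ Ii) ∧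
    ∃ h : 0 < ℓ, J ⟨0, h⟩ = P ⊓ Ii ∧ J ⟨ℓ - 1, Nat.sub_lt h Nat.one_pos⟩ = Qi ⊓ Ii

/-- The multiplicity `mult_I(P)` of an associated prime `P` with primary component `Qi`
and `I_i = ⋂ {Q_j | P_j ⊊ P}`: the supremum in `ℕ ∪ {∞}` of the lengths of the chains
above. -/
noncomputable def multOf {R : Type*} [CommRing R] (Qi Ii P : Ideal R) : ℕ∞ :=
  sSup { m : ℕ∞ | ∃ ℓ : ℕ, m = (ℓ : ℕ∞) ∧ IsMultChain Qi Ii P ℓ }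

open Finset

namespace Ideal

variable {R : Type*} [CommRing R] {Q : Ideal R}

theorem mul_pow_mem_of_le {x f : R} {a b : ℕ} (hab : a ≤ b) (h : x * f ^ a ∈ Q) :
    x * f ^ b ∈ Q := by
  rw [← Nat.add_sub_cancel' hab, pow_add, ← mul_assoc]
  exact Q.mul_mem_right _ h

theorem IsPrimary.radical_colon_singleton (hQ : Q.IsPrimary) {a : R} (ha : a ∉ Q) :
    (Q.colon {a}).radical = Q.radical := by
  rw [Submodule.IsPrimary.radical_colon_singleton_of_notMem hQ ha, Submodule.colon_univ]

theorem IsPrimary.colon_singleton (hQ : Q.IsPrimary) {a : R} (ha : a ∉ Q) :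
    (Q.colon {a}).IsPrimary := by
  refine isPrimary_iff.mpr ⟨fun h => ha ?_, fun {x y} hxy => ?_⟩
  · simpa using (Submodule.colon_eq_top_iff_subset _).mp h
  · rw [hQ.radical_colon_singleton ha]
    simp only [Submodule.mem_colon_singleton, smul_eq_mul] at hxy ⊢
    exact (isPrimary_iff.mp hQ).2 (by rwa [mul_right_comm])

end Ideal

section Multiplicity

variable {R : Type*} [CommRing R] {Q I P : Ideal R}

theorem IsMultChain.le_multOf {ℓ : ℕ} (h : IsMultChain Q I P ℓ) : (ℓ : ℕ∞) ≤ multOf Q I P :=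
  le_sSup ⟨ℓ, rfl, h⟩

theorem isMultChain_of_strictMonoOn {m : ℕ} (J : ℕ → Ideal R)
    (hJ : ∀ j ≤ m, (J j).IsPrimary ∧ (J j).radical = P)
    (hmono : StrictMonoOn (fun j => J j ⊓ I) (Set.Iic m)) (h0 : J 0 = Q)
    (hm : J m ⊓ I = P ⊓ I) :
    IsMultChain Q I P (m + 1) := by
  refine ⟨fun a => J (m - a) ⊓ I, fun a b hab => ?_,
    fun a => ⟨J (m - a), hJ _ (Nat.sub_le _ _) |>.1, hJ _ (Nat.sub_le _ _) |>.2, rfl⟩,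
    m.succ_pos, by simpa using hm, by simp [h0]⟩
  have hb := b.isLt
  have hab : a.val < b.val := hab
  exact hmono (by simp) (by simp) (by omega)

theorem le_multOf_of_strictMonoOn (hP : P.IsPrime) {n : ℕ} (J : ℕ → Ideal R)
    (hJ : ∀ j ≤ n, (J j).IsPrimary ∧ (J j).radical = P)
    (hmono : StrictMonoOn (fun j => J j ⊓ I) (Set.Iic n)) (h0 : J 0 = Q) :
    (n + 1 : ℕ∞) ≤ multOf Q I P := by
  by_cases htop : J n ⊓ I = P ⊓ I
  · exact_mod_cast (isMultChain_of_strictMonoOn J hJ hmono h0 htop).le_multOf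
  have hlt : J n ⊓ I < P ⊓ I :=
    lt_of_le_of_ne (inf_le_inf_right I ((hJ n le_rfl).2 ▸ Ideal.le_radical)) htop
  let J' j := if j ≤ n then J j else P
  have hchain : IsMultChain Q I P (n + 1 + 1) := by
    refine isMultChain_of_strictMonoOn J' (fun j _ => ?_) (fun a ha b hb hab => ?_)
      (by simp [J', h0]) (by simp [J'])
    · by_cases hj : j ≤ n
      · simpa [J', hj] using hJ j hj
      · simpa [J', hj] using ⟨hP.isPrimary, hP.radical⟩
    · have han : a ≤ n := by simp only [Set.mem_Iic] at hb; omega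
      by_cases hbn : b ≤ n
      · simpa [J', han, hbn] using hmono han hbn hab
      · have hle := hmono.monotoneOn han (Set.mem_Iic.mpr le_rfl) han
        simpa [J', han, hbn] using hle.trans_lt hlt
  calc (n + 1 : ℕ∞) ≤ ((n + 1 + 1 : ℕ) : ℕ∞) := by norm_cast; omega
    _ ≤ multOf Q I P := hchain.le_multOf

theorem le_multOf_of_mul_pow_notMem (hQ : Q.IsPrimary) (hQP : Q.radical = P) {u f : R} {n : ℕ}
    (hu : u ∈ I) (hn : u * f ^ n ∉ Q) (hn1 : u * f ^ (n + 1) ∈ Q) :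
    (n + 1 : ℕ∞) ≤ multOf Q I P := by
  have hpow : ∀ j ≤ n, f ^ j ∉ Q := fun j hj h =>
    hn (by rw [← Nat.sub_add_cancel hj, pow_add]; exact Q.mul_mem_left _ (Q.mul_mem_left _ h))
  refine le_multOf_of_strictMonoOn (hQP ▸ Ideal.isPrime_radical hQ) (fun j => Q.colon {f ^ j})
    (fun j hj => ⟨hQ.colon_singleton (hpow j hj), hQP ▸ hQ.radical_colon_singleton (hpow j hj)⟩)
    (fun a _ b hb hab => ?_) (by ext; simp)
  simp only [Set.mem_Iic] at hb
  refine lt_of_le_not_ge (inf_le_inf_right I fun r hr => ?_) fun hle => hn ?_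
  · simp only [Submodule.mem_colon_singleton, smul_eq_mul] at hr ⊢
    exact Ideal.mul_pow_mem_of_le hab.le hr
  · have hmem : u * f ^ (n + 1 - b) ∈ Q.colon {f ^ b} ⊓ I := by
      refine ⟨Submodule.mem_colon_singleton.mpr ?_, I.mul_mem_right _ hu⟩
      rwa [smul_eq_mul, mul_assoc, ← pow_add, Nat.sub_add_cancel (by omega)]
    have := Submodule.mem_colon_singleton.mp (hle hmem).1
    rw [smul_eq_mul, mul_assoc, ← pow_add] at this
    exact Ideal.mul_pow_mem_of_le (by omega) this

end Multiplicity

section PrimaryDecomposition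

open scoped Classical

variable {R ι : Type*} [CommRing R]

/-- `mult_I(P_i)` for the decomposition `I = ⋂ Q_i`. -/
noncomputable def multAt (Q P : ι → Ideal R) (i : ι) : ℕ∞ :=
  multOf (Q i) (⨅ j ∈ {j | P j < P i}, Q j) (P i)

variable [Fintype ι] {Q P : ι → Ideal R}

theorem le_sum_multAt_of_mul_pow_notMem (hQ : ∀ i, (Q i).IsPrimary)
    (hP : ∀ i, (Q i).radical = P i) (f : R) (t : ι) (x : R) (n : ℕ)
    (hmem : ∀ i, P i ≤ P t → x * f ^ (n + 1) ∈ Q i) (hn : x * f ^ n ∉ Q t) :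
    (n + 1 : ℕ∞) ≤ ∑ i ∈ univ.filter (fun i => P i ≤ P t ∧ f ∈ P i), multAt Q P i := by
  induction t using (Finite.wellFounded_of_trans_of_irrefl (fun i j : ι => P i < P j)).induction
    generalizing x n with
  | _ t ih =>
  have hft : f ∈ P t := by
    rw [← hP t]
    refine ((Ideal.isPrimary_iff.mp (hQ t)).2 ?_).resolve_left hn
    rw [mul_assoc, ← pow_succ]
    exact hmem t le_rfl
  have hex : ∃ j, ∀ i, P i < P t → x * f ^ j ∈ Q i := ⟨n + 1, fun i hi => hmem i hi.le⟩
  set m := Nat.find hex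
  obtain ⟨ν, hν⟩ : ∃ ν, n + 1 = m + ν :=
    Nat.exists_eq_add_of_le (Nat.find_min' hex fun i hi => hmem i hi.le)
  have hlow : (m : ℕ∞) ≤ ∑ i ∈ univ.filter (fun i => P i < P t ∧ f ∈ P i), multAt Q P i := by
    rcases hm : m with _ | m'
    · simp
    obtain ⟨s, hs, hxs⟩ : ∃ s, P s < P t ∧ x * f ^ m' ∉ Q s := by
      simpa using Nat.find_min hex (show m' < m by omega)
    have hspec : ∀ i, P i < P t → x * f ^ (m' + 1) ∈ Q i := hm ▸ Nat.find_spec hex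
    calc ((m' + 1 : ℕ) : ℕ∞)
        ≤ ∑ i ∈ univ.filter (fun i => P i ≤ P s ∧ f ∈ P i), multAt Q P i :=
          mod_cast ih s hs x m' (fun i hi => hspec i (hi.trans_lt hs)) hxs
      _ ≤ ∑ i ∈ univ.filter (fun i => P i < P t ∧ f ∈ P i), multAt Q P i :=
          sum_le_sum_of_subset (monotone_filter_right _ fun _ _ => And.imp_left (·.trans_lt hs))
  have hup : (ν : ℕ∞) ≤ multAt Q P t := by
    rcases ν with _ | ν
    · simp
    have hu : x * f ^ m ∈ ⨅ j ∈ {j | P j < P t}, Q j := by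
      simpa [Ideal.mem_iInf] using Nat.find_spec hex
    refine mod_cast le_multOf_of_mul_pow_notMem (f := f) (hQ t) (hP t) hu ?_ ?_
    · rwa [mul_assoc, ← pow_add, show m + ν = n by omega]
    · rw [mul_assoc, ← pow_add, show m + (ν + 1) = n + 1 by omega]
      exact hmem t le_rfl
  have ht : t ∉ univ.filter (fun i => P i < P t ∧ f ∈ P i) := by simp
  calc (n + 1 : ℕ∞) = m + ν := mod_cast hν
    _ ≤ ∑ i ∈ univ.filter (fun i => P i < P t ∧ f ∈ P i), multAt Q P i + multAt Q P t :=
      add_le_add hlow hup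
    _ = ∑ i ∈ insert t (univ.filter (fun i => P i < P t ∧ f ∈ P i)), multAt Q P i := by
      rw [sum_insert ht, add_comm]
    _ ≤ ∑ i ∈ univ.filter (fun i => P i ≤ P t ∧ f ∈ P i), multAt Q P i :=
      sum_le_sum_of_subset <| insert_subset (by simp [hft])
        (monotone_filter_right _ fun _ _ => And.imp_left le_of_lt)

end PrimaryDecomposition

open scoped Classical in
theorem ell_le_sum_mult_general
    {R : Type*} [CommRing R] {k : ℕ}
    (Q : Fin k → Ideal R) (P : Fin k → Ideal R)
    (hQ : ∀ i, (Q i).IsPrimary) (hP : ∀ i, (Q i).radical = P i)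
    (f : R) (l : ℕ) (hl : 1 ≤ l)
    (hne : { g : R | g * f ^ (l - 1) ∈ (⨅ i, Q i : Ideal R) } ≠
           { g : R | g * f ^ l ∈ (⨅ i, Q i : Ideal R) }) :
    (l : ℕ∞) ≤ ∑ i ∈ Finset.univ.filter (fun i => f ∈ P i),
      multOf (Q i) (⨅ j ∈ { j : Fin k | P j < P i }, Q j) (P i) := by
  obtain ⟨n, rfl⟩ := Nat.exists_eq_add_of_le' hl
  rw [Nat.add_sub_cancel] at hne
  obtain ⟨g, hg, hgn⟩ : ∃ g, g * f ^ (n + 1) ∈ (⨅ i, Q i : Ideal R) ∧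
      g * f ^ n ∉ (⨅ i, Q i : Ideal R) := by
    by_contra! h
    exact hne (Set.ext fun g => ⟨Ideal.mul_pow_mem_of_le (Q := ⨅ i, Q i) n.le_succ, h g⟩)
  obtain ⟨t, ht⟩ : ∃ t, g * f ^ n ∉ Q t := by simpa [Ideal.mem_iInf] using hgn
  calc ((n + 1 : ℕ) : ℕ∞)
      ≤ ∑ i ∈ univ.filter (fun i => P i ≤ P t ∧ f ∈ P i), multAt Q P i :=
        mod_cast le_sum_multAt_of_mul_pow_notMem hQ hP f t g n
          (fun i _ => Ideal.mem_iInf.mp hg i) ht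
    _ ≤ ∑ i ∈ univ.filter (fun i => f ∈ P i), multAt Q P i :=
        sum_le_sum_of_subset (monotone_filter_right _ fun _ _ => And.right)

open scoped Classical in
/-- Let `I = Q_1 ∩ … ∩ Q_k` be a minimal primary decomposition in a
Noetherian commutative ring and `f ∈ R`.  If `(I : f^{l-1}) ≠ (I : f^l)` for some
`l ≥ 1`, then `l ≤ Σ_{i : f ∈ P_i} mult_I(P_i)`; equivalently
`ℓ_f(I) ≤ Σ_{i : f ∈ P_i} mult_I(P_i)`. -/
theorem ell_le_sum_mult
    {R : Type*} [CommRing R] [IsNoetherianRing R] {k : ℕ}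
    (Q : Fin k → Ideal R) (P : Fin k → Ideal R)
    (hQ : ∀ i, (Q i).IsPrimary) (hP : ∀ i, (Q i).radical = P i)
    (hdist : ∀ i j, i ≠ j → P i ≠ P j)
    (hmin : ∀ i, ¬ ((⨅ j ∈ { j : Fin k | j ≠ i }, Q j : Ideal R) ≤ Q i))
    (f : R) (l : ℕ) (hl : 1 ≤ l)
    (hne : { g : R | g * f ^ (l - 1) ∈ (⨅ i, Q i : Ideal R) } ≠
           { g : R | g * f ^ l ∈ (⨅ i, Q i : Ideal R) }) :
    (l : ℕ∞) ≤ ∑ i ∈ Finset.univ.filter (fun i => f ∈ P i),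
      multOf (Q i) (⨅ j ∈ { j : Fin k | P j < P i }, Q j) (P i) :=
  ell_le_sum_mult_general Q P hQ hP f l hl hne
end

section
/- Let k be a field, S = k[x_0,…,x_n], and let I ⊆ S be an ideal with minimal primary decomposition I = Q_1 ∩ … ∩ Q_k, with Q_i P_i-primary. Assume each multiplicity mult_I(P_i) is finite and set B = Σ_{i=1}^{k} mult_I(P_i). Then there exists a multi-exponent α ∈ ℕ^{n+1} with α_0 + … + α_n ≤ B such that (I : x_0^{α_0}⋯x_n^{α_n}) = (I : (x_0⋯x_n)^∞). In particular, if I contains a monomial, then I contains a monomial of degree not greater than B. -/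
namespace Ideal

variable {R : Type*} [CommRing R]

lemma mem_colon_singleton {I : Ideal R} {a r : R} : r ∈ I.colon {a} ↔ r * a ∈ I :=
  Submodule.mem_colon_singleton

lemma colon_singleton_one (I : Ideal R) : I.colon {1} = I := by
  ext
  simp

lemma colon_singleton_le_of_dvd (I : Ideal R) {a b : R} (h : a ∣ b) :
    I.colon {a} ≤ I.colon {b} := fun r hr =>
  mem_colon_singleton.2 <| I.mem_of_dvd (mul_dvd_mul_left r h) (mem_colon_singleton.1 hr)

namespace IsPrimary

variable {Q : Ideal R} (hQ : Q.IsPrimary) {a : R} (ha : a ∉ Q)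
include hQ ha

lemma radical_colon_singleton_s12 : (Q.colon {a}).radical = Q.radical := by
  simpa using Submodule.IsPrimary.radical_colon_singleton_of_notMem hQ ha

lemma colon_singleton_le_radical : Q.colon {a} ≤ Q.radical :=
  hQ.radical_colon_singleton_s12 ha ▸ le_radical

lemma isPrimary_colon_singleton : (Q.colon {a}).IsPrimary := by
  refine isPrimary_iff.2 ⟨?_, fun {r s} hrs => ?_⟩
  · rwa [Ne, Submodule.colon_eq_top_iff_subset, Set.singleton_subset_iff]
  · rw [hQ.radical_colon_singleton_s12 ha, mem_colon_singleton]
    rw [mem_colon_singleton, mul_right_comm] at hrs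
    exact (isPrimary_iff.1 hQ).2 hrs

end IsPrimary

/-- The saturation `(I : c^∞)`. -/
def saturation (I : Ideal R) (c : R) : Ideal R :=
  ⨆ m : ℕ, I.colon {c ^ m}

lemma monotone_colon_pow (I : Ideal R) (c : R) : Monotone fun m : ℕ => I.colon {c ^ m} :=
  fun _ _ h => I.colon_singleton_le_of_dvd (pow_dvd_pow c h)

lemma mem_saturation {I : Ideal R} {c g : R} : g ∈ I.saturation c ↔ ∃ m : ℕ, g * c ^ m ∈ I := by
  rw [saturation, Submodule.mem_iSup_of_directed _ (monotone_colon_pow I c).directed_le]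
  simp

lemma saturation_mono {I J : Ideal R} (h : I ≤ J) (c : R) : I.saturation c ≤ J.saturation c :=
  iSup_mono fun _ => Submodule.colon_mono h le_rfl

lemma exists_saturation_eq_colon_pow [IsNoetherianRing R] (I : Ideal R) (c : R) :
    ∃ N : ℕ, I.saturation c = I.colon {c ^ N} := by
  obtain ⟨N, hN⟩ := monotone_stabilizes_iff_noetherian.2 ‹_› ⟨_, monotone_colon_pow I c⟩
  refine ⟨N, le_antisymm (iSup_le fun m => ?_) (le_iSup (fun m => I.colon {c ^ m}) N)⟩
  rcases le_total m N with h | h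
  · exact monotone_colon_pow I c h
  · exact (hN m h).ge

end Ideal

lemma Fintype.prod_pow_dvd_prod_pow_sum {ι M : Type*} [Fintype ι] [CommMonoid M] (x : ι → M)
    (α : ι → ℕ) : ∏ i, x i ^ α i ∣ (∏ i, x i) ^ ∑ i, α i := by
  rw [← Finset.prod_pow]
  exact Finset.prod_dvd_prod_of_dvd _ _ fun i _ =>
    pow_dvd_pow _ (Finset.single_le_sum (fun _ _ => Nat.zero_le _) (Finset.mem_univ i))

lemma Multiset.prod_map_eq_prod_pow_count {ι M : Type*} [Fintype ι] [DecidableEq ι] [CommMonoid M]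
    (t : Multiset ι) (x : ι → M) : (t.map x).prod = ∏ i, x i ^ t.count i := by
  rw [Finset.prod_multiset_map_count]
  exact Finset.prod_subset (Finset.subset_univ _) fun i _ hi => by
    rw [Multiset.count_eq_zero.2 (by simpa using hi), pow_zero]

section Multiplicity

variable {R : Type*} [CommRing R] {Q I W : Ideal R}

lemma le_multOf_of_chain {P : Ideal R} {ℓ : ℕ} (J : ℕ → Ideal R) (hℓ : 0 < ℓ)
    (hJ : ∀ k, k + 1 < ℓ → J (k + 1) < J k)
    (hprimary : ∀ k < ℓ, ∃ Rk : Ideal R, Rk.IsPrimary ∧ Rk.radical = P ∧ J k = Rk ⊓ I)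
    (hfirst : J 0 = P ⊓ I) (hlast : J (ℓ - 1) = Q ⊓ I) : (ℓ : ℕ∞) ≤ multOf Q I P := by
  have hanti : StrictAntiOn J (Set.Iic (ℓ - 1)) :=
    strictAntiOn_Iic_of_succ_lt fun k hk => by simpa using hJ k (by omega)
  refine le_sSup
    ⟨ℓ, rfl, fun k => J k, fun a b hab => ?_, fun k => hprimary k k.2, hℓ, hfirst, hlast⟩
  exact hanti (Set.mem_Iic.2 (by omega)) (Set.mem_Iic.2 (by omega)) hab

lemma one_le_multOf (hQ : Q.IsPrimary) : 1 ≤ multOf Q I Q.radical := by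
  have hP : Q.radical.IsPrimary := (Ideal.isPrime_radical hQ).isPrimary
  by_cases h : Q.radical ⊓ I = Q ⊓ I
  · simpa using le_multOf_of_chain (ℓ := 1) (fun _ => Q.radical ⊓ I) one_pos (by omega)
      (fun _ _ => ⟨_, hP, Ideal.radical_idem _, rfl⟩) rfl h
  · calc (1 : ℕ∞) ≤ 2 := by norm_num
      _ ≤ _ := by
        refine le_multOf_of_chain (ℓ := 2) (fun k => if k = 0 then Q.radical ⊓ I else Q ⊓ I)
          two_pos (fun k hk => ?_) (fun k _ => ?_) rfl rfl
        · obtain rfl : k = 0 := by omega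
          exact lt_of_le_of_ne (inf_le_inf_right I Ideal.le_radical) (Ne.symm h)
        · split_ifs
          · exact ⟨_, hP, Ideal.radical_idem _, rfl⟩
          · exact ⟨_, hQ, rfl, rfl⟩

variable {L : List R} {k : ℕ}

lemma prod_drop_succ_notMem (hk : ¬ W ≤ Q.colon {(L.eraseIdx k).prod}) :
    (L.drop (k + 1)).prod ∉ Q := fun h => hk fun u _ => by
  rw [Ideal.mem_colon_singleton, List.eraseIdx_eq_take_drop_succ, List.prod_append]
  exact Q.mul_mem_left _ (Q.mul_mem_left _ h)

lemma colon_prod_drop_succ_inf_lt (hWI : W ≤ I) (hL : W ≤ Q.colon {L.prod}) (hk : k < L.length)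
    (hkW : ¬ W ≤ Q.colon {(L.eraseIdx k).prod}) :
    Q.colon {(L.drop (k + 1)).prod} ⊓ I < Q.colon {(L.drop k).prod} ⊓ I := by
  have hdvd : (L.drop (k + 1)).prod ∣ (L.drop k).prod := by
    rw [List.drop_eq_getElem_cons hk, List.prod_cons]
    exact dvd_mul_left _ _
  refine lt_of_le_of_ne (inf_le_inf_right I (Q.colon_singleton_le_of_dvd hdvd)) fun heq => ?_
  obtain ⟨u, huW, hu⟩ := Set.not_subset.1 hkW
  have hmem : u * (L.take k).prod ∈ Q.colon {(L.drop k).prod} ⊓ I := by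
    refine Submodule.mem_inf.2 ⟨?_, I.mul_mem_right _ (hWI huW)⟩
    rw [Ideal.mem_colon_singleton, mul_assoc, List.prod_take_mul_prod_drop]
    exact Ideal.mem_colon_singleton.1 (hL huW)
  rw [← heq] at hmem
  apply hu
  rw [SetLike.mem_coe, Ideal.mem_colon_singleton, List.eraseIdx_eq_take_drop_succ,
    List.prod_append, ← mul_assoc]
  exact Ideal.mem_colon_singleton.1 (Submodule.mem_inf.1 hmem).1

theorem length_le_multOf (hQ : Q.IsPrimary) (hWI : W ≤ I) (hL : W ≤ Q.colon {L.prod})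
    (hmin : ∀ k < L.length, ¬ W ≤ Q.colon {(L.eraseIdx k).prod}) :
    (L.length : ℕ∞) ≤ multOf Q I Q.radical := by
  set d := L.length
  rcases Nat.lt_or_ge d 2 with hd | hd
  · exact le_trans (by exact_mod_cast Nat.lt_succ_iff.mp hd) (one_le_multOf hQ)
  let g : ℕ → Ideal R := fun k => Q.colon {(L.drop k).prod} ⊓ I
  have hnotMem : ∀ k < d, (L.drop (k + 1)).prod ∉ Q := fun k hk => prod_drop_succ_notMem (hmin k hk)
  have hlt : ∀ k < d, g (k + 1) < g k := fun k hk =>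
    colon_prod_drop_succ_inf_lt hWI hL hk (hmin k hk)
  refine le_multOf_of_chain (fun k => if k = 0 then Q.radical ⊓ I else g (k + 1)) (by omega)
    (fun k hk => ?_) (fun k hk => ?_) (if_pos rfl) ?_
  · rw [if_neg k.succ_ne_zero]
    split_ifs with h0
    · subst h0
      exact (hlt 1 hk).trans_le
        (inf_le_inf_right I (hQ.colon_singleton_le_radical (hnotMem 0 (by omega))))
    · exact hlt (k + 1) hk
  · split_ifs
    · exact ⟨_, (Ideal.isPrime_radical hQ).isPrimary, Ideal.radical_idem _, rfl⟩
    · exact ⟨_, hQ.isPrimary_colon_singleton (hnotMem k hk),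
        hQ.radical_colon_singleton_s12 (hnotMem k hk), rfl⟩
  · rw [if_neg (by omega)]
    simp only [g, Nat.sub_add_cancel (by omega : 1 ≤ d), d, List.drop_length, List.prod_nil,
      Ideal.colon_singleton_one]

end Multiplicity

section Saturation

variable {R : Type*} [CommRing R] [IsNoetherianRing R] {ι : Type*} [Fintype ι] (x : ι → R)

theorem exists_saturation_inf_le_colon_prod {Q I' Im : Ideal R} (hQ : Q.IsPrimary) (hI' : I' ≤ Im)
    {b : ℕ} (hb : multOf Q Im Q.radical ≤ b) {t' : Multiset ι}
    (ht' : I'.saturation (∏ i, x i) ≤ I'.colon {(t'.map x).prod}) :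
    ∃ t : Multiset ι, t.card ≤ b + t'.card ∧
      (Q ⊓ I').saturation (∏ i, x i) ≤ (Q ⊓ I').colon {(t.map x).prod} := by
  obtain ⟨N, hN⟩ := (Q ⊓ I').exists_saturation_eq_colon_pow (∏ i, x i)
  set W := (Q ⊓ I').saturation (∏ i, x i) ⊓ I'
  have hne : {t : Multiset ι | W ≤ Q.colon {(t.map x).prod}}.Nonempty := by
    refine ⟨N • Finset.univ.val, fun r hr => ?_⟩
    have hr : r ∈ (Q ⊓ I').colon {(∏ i, x i) ^ N} := hN ▸ hr.1
    rw [Multiset.map_nsmul, Multiset.prod_nsmul]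
    exact Submodule.colon_mono inf_le_left le_rfl hr
  obtain ⟨t, ht, htmin⟩ := (measure Multiset.card).wf.has_min _ hne
  have hmin : ∀ k < (t.toList.map x).length,
      ¬ W ≤ Q.colon {((t.toList.map x).eraseIdx k).prod} := by
    intro k hk hW
    refine htmin (t.toList.eraseIdx k) (by simpa [List.eraseIdx_map] using hW) ?_
    have := List.length_eraseIdx_add_one (by simpa using hk : k < t.toList.length)
    show Multiset.card (t.toList.eraseIdx k : Multiset ι) < t.card
    rw [Multiset.coe_card, ← Multiset.length_toList t]
    omega
  have hcard : t.card ≤ b := by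
    simpa using (length_le_multOf hQ (inf_le_right.trans hI')
      (by rwa [Multiset.prod_map_toList]) hmin).trans hb
  refine ⟨t + t', by rw [Multiset.card_add]; omega, fun g hg => ?_⟩
  have hgI' : g * (t'.map x).prod ∈ I' :=
    Ideal.mem_colon_singleton.1 (ht' (Ideal.saturation_mono inf_le_right _ hg))
  have hgQ : g * (t'.map x).prod * (t.map x).prod ∈ Q :=
    Ideal.mem_colon_singleton.1 (ht ⟨Ideal.mul_mem_right _ _ hg, hgI'⟩)
  rw [Ideal.mem_colon_singleton, Multiset.map_add, Multiset.prod_add,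
    mul_comm (t.map x).prod, ← mul_assoc]
  exact ⟨hgQ, I'.mul_mem_right _ hgI'⟩

theorem exists_card_le_sum_saturation_le_colon_prod {κ : Type*} (Q : κ → Ideal R)
    (hQ : ∀ i, (Q i).IsPrimary) (b : κ → ℕ)
    (hmult : ∀ i, multOf (Q i) (⨅ j ∈ {j | (Q j).radical < (Q i).radical}, Q j) (Q i).radical ≤ b i)
    (s : Finset κ) (hs : ∀ i ∈ s, ∀ j, (Q j).radical < (Q i).radical → j ∈ s) :
    ∃ t : Multiset ι, t.card ≤ ∑ i ∈ s, b i ∧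
      (s.inf Q).saturation (∏ i, x i) ≤ (s.inf Q).colon {(t.map x).prod} := by
  classical
  induction s using Finset.strongInduction with
  | H s ih =>
  rcases s.eq_empty_or_nonempty with rfl | hne
  · exact ⟨0, by simp, by simp⟩
  obtain ⟨i, hi, hmax⟩ := s.exists_maximalFor (fun i => (Q i).radical) hne
  have hs' : ∀ k ∈ s.erase i, ∀ j, (Q j).radical < (Q k).radical → j ∈ s.erase i := by
    intro k hk j hjk
    refine Finset.mem_erase.2 ⟨?_, hs k (Finset.mem_of_mem_erase hk) j hjk⟩
    rintro rfl
    exact hjk.not_ge (hmax (Finset.mem_of_mem_erase hk) hjk.le)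
  obtain ⟨t', ht'card, ht'⟩ := ih _ (s.erase_ssubset hi) hs'
  have hle : (s.erase i).inf Q ≤ ⨅ j ∈ {j | (Q j).radical < (Q i).radical}, Q j :=
    le_iInf₂ fun j hj => Finset.inf_le
      (Finset.mem_erase.2 ⟨by rintro rfl; exact lt_irrefl (Q j).radical hj, hs i hi j hj⟩)
  obtain ⟨t, htcard, ht⟩ := exists_saturation_inf_le_colon_prod x (hQ i) hle (hmult i) ht'
  rw [← Finset.insert_erase hi, Finset.inf_insert, Finset.sum_insert (Finset.notMem_erase i s)]
  exact ⟨t, by omega, ht⟩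

end Saturation

open MvPolynomial in
theorem exists_small_exponent_colon_eq_saturation_general
    {F : Type*} [Field F] {n : ℕ} {r : ℕ}
    (Q : Fin r → Ideal (MvPolynomial (Fin (n + 1)) F))
    (P : Fin r → Ideal (MvPolynomial (Fin (n + 1)) F))
    (hQ : ∀ i, (Q i).IsPrimary) (hP : ∀ i, (Q i).radical = P i)
    (b : Fin r → ℕ)
    (hmult : ∀ i, multOf (Q i) (⨅ j ∈ { j : Fin r | P j < P i }, Q j) (P i) = (b i : ℕ∞)) :
    (∃ α : Fin (n + 1) → ℕ, (∑ i, α i) ≤ ∑ i, b i ∧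
      { g : MvPolynomial (Fin (n + 1)) F |
          g * ∏ i, (X i : MvPolynomial (Fin (n + 1)) F) ^ α i ∈ (⨅ i, Q i : Ideal _) } =
      { g : MvPolynomial (Fin (n + 1)) F |
          ∃ m : ℕ, g * (∏ i, (X i : MvPolynomial (Fin (n + 1)) F)) ^ m ∈
            (⨅ i, Q i : Ideal _) }) ∧
    ((∃ β : Fin (n + 1) → ℕ,
        (∏ i, (X i : MvPolynomial (Fin (n + 1)) F) ^ β i) ∈ (⨅ i, Q i : Ideal _)) →
      ∃ β : Fin (n + 1) → ℕ, (∑ i, β i) ≤ ∑ i, b i ∧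
        (∏ i, (X i : MvPolynomial (Fin (n + 1)) F) ^ β i) ∈ (⨅ i, Q i : Ideal _)) := by
  obtain rfl : P = fun i => (Q i).radical := funext fun i => (hP i).symm
  obtain ⟨t, htcard, hsat⟩ := exists_card_le_sum_saturation_le_colon_prod X Q hQ b
    (fun i => (hmult i).le) Finset.univ fun _ _ j _ => Finset.mem_univ j
  rw [Finset.inf_univ_eq_iInf] at hsat
  have hdeg : ∑ i, t.count i ≤ ∑ i, b i := by
    rwa [Multiset.sum_count_eq_card fun a _ => Finset.mem_univ a]
  have hcolon : ∀ g, g * ∏ i, (X i : MvPolynomial (Fin (n + 1)) F) ^ t.count i ∈ ⨅ i, Q i ↔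
      ∃ m : ℕ, g * (∏ i, X i) ^ m ∈ ⨅ i, Q i := fun g =>
    ⟨fun h => ⟨_, Ideal.mem_of_dvd _
        (mul_dvd_mul_left g (Fintype.prod_pow_dvd_prod_pow_sum _ _)) h⟩,
      fun h => by
        rw [← Multiset.prod_map_eq_prod_pow_count]
        exact Ideal.mem_colon_singleton.1 (hsat (Ideal.mem_saturation.2 h))⟩
  refine ⟨⟨_, hdeg, Set.ext hcolon⟩, fun ⟨β, hβ⟩ => ⟨_, hdeg, ?_⟩⟩
  simpa using (hcolon 1).2
    ⟨∑ i, β i, by simpa using Ideal.mem_of_dvd _ (Fintype.prod_pow_dvd_prod_pow_sum X β) hβ⟩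

open MvPolynomial in
/-- Let `I = Q_1 ∩ … ∩ Q_r` be a minimal primary decomposition of an
ideal of `S = F[x_0,…,x_n]` with all multiplicities finite, `mult_I(P_i) = b_i`, and
`B = Σ b_i`.  Then there is a multi-exponent `α` of total degree at most `B` with
`(I : x^α) = (I : (x_0⋯x_n)^∞)`; in particular, if `I` contains a monomial then it
contains one of degree at most `B`. -/
theorem exists_small_exponent_colon_eq_saturation
    {F : Type*} [Field F] {n : ℕ} {r : ℕ}
    (Q : Fin r → Ideal (MvPolynomial (Fin (n + 1)) F))
    (P : Fin r → Ideal (MvPolynomial (Fin (n + 1)) F))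
    (hQ : ∀ i, (Q i).IsPrimary) (hP : ∀ i, (Q i).radical = P i)
    (hdist : ∀ i j, i ≠ j → P i ≠ P j)
    (hmin : ∀ i, ¬ ((⨅ j ∈ { j : Fin r | j ≠ i }, Q j :
        Ideal (MvPolynomial (Fin (n + 1)) F)) ≤ Q i))
    (b : Fin r → ℕ)
    (hmult : ∀ i, multOf (Q i) (⨅ j ∈ { j : Fin r | P j < P i }, Q j) (P i) = (b i : ℕ∞)) :
    (∃ α : Fin (n + 1) → ℕ, (∑ i, α i) ≤ ∑ i, b i ∧
      { g : MvPolynomial (Fin (n + 1)) F |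
          g * ∏ i, (X i : MvPolynomial (Fin (n + 1)) F) ^ α i ∈ (⨅ i, Q i : Ideal _) } =
      { g : MvPolynomial (Fin (n + 1)) F |
          ∃ m : ℕ, g * (∏ i, (X i : MvPolynomial (Fin (n + 1)) F)) ^ m ∈
            (⨅ i, Q i : Ideal _) }) ∧
    ((∃ β : Fin (n + 1) → ℕ,
        (∏ i, (X i : MvPolynomial (Fin (n + 1)) F) ^ β i) ∈ (⨅ i, Q i : Ideal _)) →
      ∃ β : Fin (n + 1) → ℕ, (∑ i, β i) ≤ ∑ i, b i ∧
        (∏ i, (X i : MvPolynomial (Fin (n + 1)) F) ^ β i) ∈ (⨅ i, Q i : Ideal _)) :=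
  exists_small_exponent_colon_eq_saturation_general Q P hQ hP b hmult
end
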